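/- Let L be a finitely generated Lie algebra of subexponential growth over a field F of characteristic 0. Then the universal enveloping algebra U(L) has subexponential growth; that is, if W_m denotes the span of products of at most m generators of L inside U(L), then dim W_m grows subexponentially in m. -/

import Mathlib

/-!
Give the vectors of a basis of `V n` (the span of brackets of length at most `n`) weight `n`.
Since `⁅V i, V j⁆ ⊆ V (i + j)`, the PBW straightening argument (swap two adjacent factors that
are out of order, at the cost of a shorter product of no larger weight) shows that `W m` is
spanned by sorted monomials of weight at most `m`. Counting these with a generating function
gives, for `0 < t < 1`,
`dim W m * t ^ m ≤ ∏ n ≤ m, (1 - t ^ n)⁻¹ ^ dim V n ≤ exp ((∑' n, dim V n * t ^ n) / (1 - t))`,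
and the series converges because `dim V n` grows subexponentially. Taking `t > C⁻¹` then
gives `dim W m / C ^ m → 0`.
-/

open Filter

/-- `growthSpace X n` is the span of all (left-normed) brackets of length at most `n` in the
generating set `X`; these spans compute the growth of the Lie algebra generated by `X`. -/
def growthSpace {F : Type} [Field F] {L : Type} [LieRing L] [LieAlgebra F L]
    (X : Set L) : ℕ → Submodule F L
  | 0 => ⊥
  | 1 => Submodule.span F X
  | (n + 2) => growthSpace X (n + 1) ⊔
      Submodule.span F {z | ∃ x ∈ X, ∃ y ∈ growthSpace (F := F) X (n + 1), z = ⁅x, y⁆}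

/-- `ueaFiltration X m` is the span, inside `U(L)`, of all products of at most `m` generators
from `X`. -/
noncomputable def ueaFiltration {F : Type} [Field F] {L : Type} [LieRing L] [LieAlgebra F L]
    (X : Set L) : ℕ → Submodule F (UniversalEnvelopingAlgebra F L)
  | 0 => Submodule.span F {1}
  | (m + 1) => ueaFiltration X m ⊔
      Submodule.span F {z | ∃ x ∈ X, ∃ w ∈ ueaFiltration (F := F) X m,
        z = UniversalEnvelopingAlgebra.ι F x * w}

section GrowthSpace

variable {F : Type} [Field F] {L : Type} [LieRing L] [LieAlgebra F L] (X : Set L)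

theorem growthSpace_le_succ (n : ℕ) : growthSpace (F := F) X n ≤ growthSpace X (n + 1) := by
  cases n with
  | zero => exact bot_le
  | succ n => exact le_sup_left

theorem growthSpace_mono : Monotone (growthSpace (F := F) X) :=
  monotone_nat_of_le_succ (growthSpace_le_succ X)

theorem growthSpace_succ (n : ℕ) :
    growthSpace (F := F) X (n + 1) =
      Submodule.span F X ⊔
        Submodule.span F {z | ∃ x ∈ X, ∃ y ∈ growthSpace (F := F) X n, z = ⁅x, y⁆} := by
  induction n with
  | zero =>
    show Submodule.span F X = _
    refine (sup_eq_left.2 <| ((Submodule.span_eq_bot.2 ?_).trans_le bot_le)).symm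
    rintro _ ⟨x, -, y, hy, rfl⟩
    simp_all [growthSpace]
  | succ n ih =>
    show growthSpace X (n + 1) ⊔ _ = _
    nth_rw 1 [ih]
    rw [sup_assoc]
    congr 1
    refine sup_eq_right.2 (Submodule.span_mono ?_)
    rintro _ ⟨x, hx, y, hy, rfl⟩
    exact ⟨x, hx, y, growthSpace_le_succ X n hy, rfl⟩

theorem lie_mem_growthSpace_succ {x y : L} (hx : x ∈ X) {n : ℕ}
    (hy : y ∈ growthSpace (F := F) X n) : ⁅x, y⁆ ∈ growthSpace (F := F) X (n + 1) := by
  rw [growthSpace_succ]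
  exact Submodule.mem_sup_right (Submodule.subset_span ⟨x, hx, y, hy, rfl⟩)

theorem lie_mem_growthSpace {i j : ℕ} {x y : L} (hx : x ∈ growthSpace (F := F) X i)
    (hy : y ∈ growthSpace (F := F) X j) : ⁅x, y⁆ ∈ growthSpace (F := F) X (i + j) := by
  induction i generalizing x y j with
  | zero =>
    rw [growthSpace, Submodule.mem_bot] at hx
    simp [hx]
  | succ i ih =>
    rw [growthSpace_succ, ← Submodule.span_union] at hx
    induction hx using Submodule.span_induction with
    | mem z hz =>
      rcases hz with hz | ⟨u, hu, v, hv, rfl⟩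
      · exact growthSpace_mono X (by omega) (lie_mem_growthSpace_succ X hz hy)
      · rw [lie_lie]
        refine sub_mem ?_ ?_
        · exact growthSpace_mono X (by omega) (lie_mem_growthSpace_succ X hu (ih hv hy))
        · exact growthSpace_mono X (by omega) (ih hv (lie_mem_growthSpace_succ X hu hy))
    | zero => simp
    | add a b _ _ ha hb => rw [add_lie]; exact add_mem ha hb
    | smul c a _ ha => rw [smul_lie]; exact Submodule.smul_mem _ _ ha

theorem span_lie_eq_iSup_map (V : Submodule F L) :
    Submodule.span F {z | ∃ x ∈ X, ∃ y ∈ V, z = ⁅x, y⁆} =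
      ⨆ x : X, V.map (LieAlgebra.ad F L x) := by
  have : {z | ∃ x ∈ X, ∃ y ∈ V, z = ⁅x, y⁆} = ⋃ x : X, LieAlgebra.ad F L x '' V := by
    ext; simp [eq_comm]
  simp_rw [this, Submodule.span_iUnion, Submodule.span_image, Submodule.span_eq]

instance finiteDimensional_growthSpace [Finite X] (n : ℕ) :
    FiniteDimensional F (growthSpace (F := F) X n) := by
  induction n with
  | zero => exact inferInstanceAs (FiniteDimensional F (⊥ : Submodule F L))
  | succ n ih =>
    rw [growthSpace_succ, span_lie_eq_iSup_map]
    have := FiniteDimensional.span_of_finite F (Set.toFinite X)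
    infer_instance

end GrowthSpace

section Straightening

theorem prod_append_cons_cons {I A : Type} [Ring A] (b : I → A) (l₁ l₂ : List I) (a c : I) :
    ((l₁ ++ a :: c :: l₂).map b).prod =
      ((l₁ ++ c :: a :: l₂).map b).prod +
        (l₁.map b).prod * (b a * b c - b c * b a) * (l₂.map b).prod := by
  simp only [List.map_append, List.map_cons, List.prod_append, List.prod_cons]
  noncomm_ring

variable {I : Type} [LinearOrder I]

def inversionCount : List I → ℕ
  | [] => 0
  | a :: l => l.countP (· < a) + inversionCount l

theorem inversionCount_swap_lt {a c : I} (h : c < a) (l₁ l₂ : List I) :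
    inversionCount (l₁ ++ c :: a :: l₂) < inversionCount (l₁ ++ a :: c :: l₂) := by
  induction l₁ with
  | nil =>
    simp [inversionCount, h, h.not_gt]
    omega
  | cons x l₁ ih =>
    have hperm : (l₁ ++ c :: a :: l₂).Perm (l₁ ++ a :: c :: l₂) :=
      (List.Perm.swap a c l₂).append_left l₁
    simp only [List.cons_append, inversionCount, hperm.countP_eq]
    omega

theorem exists_eq_append_cons_cons_of_not_pairwise {l : List I} (h : ¬ l.Pairwise (· ≤ ·)) :
    ∃ l₁ a c l₂, l = l₁ ++ a :: c :: l₂ ∧ c < a := by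
  by_contra! H
  exact h <| List.isChain_iff_pairwise.1 <|
    List.isChain_iff_forall_rel_of_append_cons_cons.2 fun a c l₁ l₂ hl => H l₁ a c l₂ hl

def sortedWords (w : I → ℕ) (m : ℕ) : Set (List I) :=
  {l | l.Pairwise (· ≤ ·) ∧ (l.map w).sum ≤ m}

variable (F : Type) [CommRing F] {A : Type} [Ring A] [Algebra F A] (b : I → A) (w : I → ℕ)

def sortedWordSpan (m : ℕ) : Submodule F A :=
  Submodule.span F ((fun l => (l.map b).prod) '' sortedWords w m)

variable {F b w}

theorem sortedWordSpan_mono : Monotone (sortedWordSpan F b w) := by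
  intro m m' h
  refine Submodule.span_mono (Set.image_mono ?_)
  exact fun l hl => ⟨hl.1, hl.2.trans h⟩

theorem prod_mem_sortedWordSpan_of_pairwise {l : List I} (hl : l.Pairwise (· ≤ ·)) {m : ℕ}
    (hm : (l.map w).sum ≤ m) : (l.map b).prod ∈ sortedWordSpan F b w m :=
  Submodule.subset_span ⟨l, ⟨hl, hm⟩, rfl⟩

theorem prod_map_mem_sortedWordSpan
    (hcomm : ∀ j k, b j * b k - b k * b j ∈ Submodule.span F (b '' {r | w r ≤ w j + w k}))
    (l : List I) : (l.map b).prod ∈ sortedWordSpan F b w (l.map w).sum := by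
  by_cases hl : l.Pairwise (· ≤ ·)
  · exact prod_mem_sortedWordSpan_of_pairwise hl le_rfl
  obtain ⟨l₁, a, c, l₂, rfl, hca⟩ := exists_eq_append_cons_cons_of_not_pairwise hl
  rw [prod_append_cons_cons b]
  refine add_mem ?_ ?_
  · have hw : ((l₁ ++ c :: a :: l₂).map w).sum = ((l₁ ++ a :: c :: l₂).map w).sum := by
      simp only [List.map_append, List.map_cons, List.sum_append, List.sum_cons]; omega
    rw [← hw]
    exact prod_map_mem_sortedWordSpan hcomm (l₁ ++ c :: a :: l₂)
  · refine (Submodule.span_le (p := (sortedWordSpan F b w _).comap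
      (LinearMap.mulLeftRight F ((l₁.map b).prod, (l₂.map b).prod)))).2 ?_ (hcomm a c)
    rintro _ ⟨r, hr, rfl⟩
    have hprod : (l₁.map b).prod * b r * (l₂.map b).prod = ((l₁ ++ r :: l₂).map b).prod := by
      simp [mul_assoc]
    refine sortedWordSpan_mono ?_ (hprod ▸ prod_map_mem_sortedWordSpan hcomm (l₁ ++ r :: l₂))
    replace hr : w r ≤ w a + w c := hr
    simp only [List.map_append, List.map_cons, List.sum_append, List.sum_cons]
    omega
termination_by (l.length, inversionCount l)
decreasing_by
  all_goals subst_vars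
  · exact Prod.Lex.right' _ (by simp) (inversionCount_swap_lt hca l₁ l₂)
  · exact Prod.Lex.left _ _ (by simp)

theorem span_image_le_sortedWordSpan (k : ℕ) :
    Submodule.span F (b '' {r | w r ≤ k}) ≤ sortedWordSpan F b w k := by
  rw [Submodule.span_le]
  rintro _ ⟨r, hr, rfl⟩
  simpa using
    prod_mem_sortedWordSpan_of_pairwise (b := b) (List.pairwise_singleton _ r) (by simpa using hr)

theorem sortedWordSpan_mul_le
    (hcomm : ∀ j k, b j * b k - b k * b j ∈ Submodule.span F (b '' {r | w r ≤ w j + w k}))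
    (k m : ℕ) :
    sortedWordSpan F b w k * sortedWordSpan F b w m ≤ sortedWordSpan F b w (k + m) := by
  rw [sortedWordSpan, sortedWordSpan, Submodule.span_mul_span, Submodule.span_le]
  rintro _ ⟨_, ⟨l, hl, rfl⟩, _, ⟨l', hl', rfl⟩, rfl⟩
  have h := prod_map_mem_sortedWordSpan hcomm (l ++ l')
  simp only [List.map_append, List.prod_append, List.sum_append] at h
  exact sortedWordSpan_mono (add_le_add hl.2 hl'.2) h

end Straightening

theorem finrank_le_ncard_sortedWords {I : Type} [LinearOrder I] {F : Type} [Field F]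
    {A : Type} [Ring A] [Algebra F A] {b : I → A} {w : I → ℕ} {m : ℕ}
    (hfin : (sortedWords w m).Finite) {V : Submodule F A} (hV : V ≤ sortedWordSpan F b w m) :
    Module.finrank F V ≤ (sortedWords w m).ncard := by
  have := (hfin.image fun l => (l.map b).prod).fintype
  have : FiniteDimensional F (sortedWordSpan F b w m) :=
    FiniteDimensional.span_of_finite F (hfin.image _)
  refine (Submodule.finrank_mono hV).trans <| (finrank_span_le_card _).trans ?_
  rw [← Set.ncard_eq_toFinset_card']
  exact Set.ncard_image_le hfin

section Enveloping

open UniversalEnvelopingAlgebra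

attribute [local instance 100] LieRing.ofAssociativeRing

variable {F : Type} [Field F] {L : Type} [LieRing L] [LieAlgebra F L]
  {I : Type} [LinearOrder I] {b : I → L} {w : I → ℕ}

theorem ueaFiltration_le_sortedWordSpan {X : Set L}
    (hcomm : ∀ j k, ⁅b j, b k⁆ ∈ Submodule.span F (b '' {r | w r ≤ w j + w k}))
    (hX : X ⊆ Submodule.span F (b '' {r | w r ≤ 1})) (m : ℕ) :
    ueaFiltration (F := F) X m ≤ sortedWordSpan F (ι F ∘ b) w m := by
  have hι (k : ℕ) :
      (Submodule.span F (b '' {r | w r ≤ k})).map (ι F : L →ₗ⁅F⁆ _).toLinearMap ≤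
        sortedWordSpan F (ι F ∘ b) w k := by
    rw [Submodule.map_span, ← Set.image_comp]
    exact span_image_le_sortedWordSpan k
  have hcomm' (j k : I) : ι F (b j) * ι F (b k) - ι F (b k) * ι F (b j) ∈
      Submodule.span F ((ι F ∘ b) '' {r | w r ≤ w j + w k}) := by
    rw [← Ring.lie_def, ← LieHom.map_lie, Set.image_comp]
    exact Submodule.apply_mem_span_image_of_mem_span (ι F : L →ₗ⁅F⁆ _).toLinearMap (hcomm j k)
  induction m with
  | zero =>
    rw [ueaFiltration, Submodule.span_le, Set.singleton_subset_iff]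
    exact prod_mem_sortedWordSpan_of_pairwise (l := []) List.Pairwise.nil le_rfl
  | succ m ih =>
    refine sup_le (ih.trans (sortedWordSpan_mono m.le_succ)) ?_
    rw [Submodule.span_le]
    rintro _ ⟨x, hx, u, hu, rfl⟩
    rw [add_comm]
    exact sortedWordSpan_mul_le hcomm' 1 m
      (Submodule.mul_mem_mul (hι 1 (Submodule.mem_map_of_mem (hX hx))) (ih hu))

end Enveloping

section Counting

open Finset

theorem geom_sum_le_inv_one_sub {x : ℝ} (hx0 : 0 ≤ x) (hx1 : x < 1) (n : ℕ) :
    ∑ k ∈ range n, x ^ k ≤ (1 - x)⁻¹ := by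
  have h := geom_sum_Ico_le_of_lt_one (m := 0) (n := n) hx0 hx1
  rwa [← range_eq_Ico, pow_zero, one_div] at h

variable {κ : Type} [Fintype κ] {v : κ → ℕ}

theorem setOf_sum_mul_le_eq_filter_piFinset [DecidableEq κ] (hv : ∀ i, 0 < v i) (m : ℕ) :
    {g : κ → ℕ | ∑ i, v i * g i ≤ m} =
      ↑{g ∈ Fintype.piFinset fun _ : κ => range (m + 1) | ∑ i, v i * g i ≤ m} := by
  ext g
  simp only [Set.mem_ofPred_eq, coe_filter, Fintype.mem_piFinset, mem_range]
  refine ⟨fun hg => ⟨fun i => ?_, hg⟩, And.right⟩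
  calc g i ≤ v i * g i := Nat.le_mul_of_pos_left _ (hv i)
    _ ≤ ∑ j, v j * g j := single_le_sum (f := fun j => v j * g j) (fun _ _ => Nat.zero_le _)
          (mem_univ i)
    _ ≤ m := hg
    _ < m + 1 := m.lt_succ_self

theorem ncard_setOf_sum_mul_le_mul_pow_le (hv : ∀ i, 0 < v i) (m : ℕ) {t : ℝ} (ht0 : 0 ≤ t)
    (ht1 : t < 1) :
    ({g : κ → ℕ | ∑ i, v i * g i ≤ m}.ncard : ℝ) * t ^ m ≤ ∏ i, (1 - t ^ v i)⁻¹ := by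
  classical
  rw [setOf_sum_mul_le_eq_filter_piFinset hv, Set.ncard_coe_finset]
  calc _ = ∑ g ∈ Fintype.piFinset (fun _ : κ => range (m + 1)) with ∑ i, v i * g i ≤ m,
          t ^ m := by
        rw [sum_const, nsmul_eq_mul]
    _ ≤ ∑ g ∈ Fintype.piFinset (fun _ : κ => range (m + 1)) with ∑ i, v i * g i ≤ m,
          t ^ ∑ i, v i * g i :=
        sum_le_sum fun g hg => pow_le_pow_of_le_one ht0 ht1.le (mem_filter.1 hg).2
    _ ≤ ∑ g ∈ Fintype.piFinset fun _ : κ => range (m + 1), t ^ ∑ i, v i * g i :=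
        sum_le_sum_of_subset_of_nonneg (filter_subset _ _) fun _ _ _ => by positivity
    _ = ∏ i, ∑ k ∈ range (m + 1), (t ^ v i) ^ k := by
        simp only [prod_univ_sum, ← pow_mul, prod_pow_eq_pow_sum]
    _ ≤ ∏ i, (1 - t ^ v i)⁻¹ :=
        prod_le_prod (fun _ _ => by positivity) fun i _ =>
          geom_sum_le_inv_one_sub (by positivity) (pow_lt_one₀ ht0 ht1 (hv i).ne') _

theorem sum_mul_count_eq_sum_map {I : Type} [DecidableEq I] {w : I → ℕ} {s : Finset I}
    {l : List I} (hl : ∀ i ∈ l, i ∈ s) :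
    ∑ i ∈ s, w i * l.count i = (l.map w).sum := by
  rw [sum_list_map_count]
  refine (sum_subset (fun i hi => hl i (List.mem_toFinset.1 hi)) fun i _ hi => ?_).symm.trans ?_
  · simp [List.count_eq_zero.2 (fun h => hi (List.mem_toFinset.2 h))]
  · simp [mul_comm]

variable {I : Type} [LinearOrder I] {w : I → ℕ} {s : Finset I} {m : ℕ}

theorem mem_of_mem_sortedWords (hs : ∀ i, w i ≤ m → i ∈ s) {l : List I}
    (hl : l ∈ sortedWords w m) {i : I} (hi : i ∈ l) : i ∈ s :=
  hs i ((List.le_sum_of_mem (List.mem_map_of_mem hi)).trans hl.2)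

theorem sortedWords_finite_and_ncard_le (hs : ∀ i, w i ≤ m → i ∈ s) (hw : ∀ i ∈ s, 0 < w i) :
    (sortedWords w m).Finite ∧
      (sortedWords w m).ncard ≤ {g : s → ℕ | ∑ i : s, w i * g i ≤ m}.ncard := by
  set counts : List I → s → ℕ := fun l i => l.count (i : I)
  have hmaps : Set.MapsTo counts (sortedWords w m) {g : s → ℕ | ∑ i : s, w i * g i ≤ m} := by
    intro l hl
    change ∑ i : s, w i * l.count (i : I) ≤ m
    rw [sum_coe_sort s fun i => w i * l.count i,
      sum_mul_count_eq_sum_map fun i => mem_of_mem_sortedWords hs hl]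
    exact hl.2
  have hinj : Set.InjOn counts (sortedWords w m) := by
    intro l hl l' hl' h
    refine List.Perm.eq_of_pairwise' hl.1 hl'.1 (List.perm_iff_count.2 fun i => ?_)
    by_cases hi : i ∈ s
    · exact congrFun h ⟨i, hi⟩
    · rw [List.count_eq_zero.2 fun h => hi (mem_of_mem_sortedWords hs hl h),
        List.count_eq_zero.2 fun h => hi (mem_of_mem_sortedWords hs hl' h)]
  have hfin : {g : s → ℕ | ∑ i : s, w i * g i ≤ m}.Finite := by
    rw [setOf_sum_mul_le_eq_filter_piFinset (v := fun i : s => w i) fun i => hw i.1 i.2]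
    exact finite_toSet _
  exact ⟨hfin.of_injOn hmaps hinj, Set.ncard_le_ncard_of_injOn counts hmaps hinj hfin⟩

end Counting

section GrowthBasis

open Finset Module

variable (F : Type) [Field F] {L : Type} [LieRing L] [LieAlgebra F L] (X : Set L) [Finite X]

/-- `growthBasis F X ⟨n, i⟩` is the `i`-th vector of a basis of `V (n + 1)`, of weight `n + 1`.
Bases of the whole `V n`, rather than of `V n / V (n - 1)`, suffice for an upper bound. -/
noncomputable def growthBasis :
    (Σ n : ℕ, Fin (finrank F (growthSpace (F := F) X (n + 1)))) → L :=
  fun j => finBasis F (growthSpace (F := F) X (j.1 + 1)) j.2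

variable {F}

theorem growthSpace_le_span_growthBasis (k : ℕ) :
    growthSpace (F := F) X k ≤ Submodule.span F (growthBasis F X '' {r | r.1 + 1 ≤ k}) := by
  cases k with
  | zero => exact bot_le
  | succ n =>
    have hrange : Set.range (fun i => growthBasis F X ⟨n, i⟩) =
        (growthSpace (F := F) X (n + 1)).subtype '' Set.range (finBasis F _) := by
      rw [← Set.range_comp]; rfl
    calc growthSpace (F := F) X (n + 1)
        = Submodule.span F (Set.range fun i => growthBasis F X ⟨n, i⟩) := by
          rw [hrange, Submodule.span_image, Basis.span_eq, Submodule.map_top,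
            Submodule.range_subtype]
      _ ≤ _ := Submodule.span_mono <| by
          rintro _ ⟨i, rfl⟩
          exact ⟨⟨n, i⟩, show n + 1 ≤ n + 1 from le_rfl, rfl⟩

theorem lie_growthBasis_mem_span
    (j k : Σ n : ℕ, Fin (finrank F (growthSpace (F := F) X (n + 1)))) :
    ⁅growthBasis F X j, growthBasis F X k⁆ ∈
      Submodule.span F (growthBasis F X '' {r | r.1 + 1 ≤ (j.1 + 1) + (k.1 + 1)}) :=
  growthSpace_le_span_growthBasis X _ <|
    lie_mem_growthSpace X (Submodule.coe_mem _) (Submodule.coe_mem _)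

theorem finrank_ueaFiltration_mul_pow_le (m : ℕ) {t : ℝ} (ht0 : 0 ≤ t) (ht1 : t < 1) :
    (finrank F (ueaFiltration (F := F) X m) : ℝ) * t ^ m ≤
      ∏ n ∈ range m, ((1 - t ^ (n + 1))⁻¹) ^ finrank F (growthSpace (F := F) X (n + 1)) := by
  -- straightening works for any linear order on the basis
  let : LinearOrder (Σ n : ℕ, Fin (finrank F (growthSpace (F := F) X (n + 1)))) :=
    IsWellOrder.linearOrder WellOrderingRel
  set s := (range m).sigma fun n =>
    (univ : Finset (Fin (finrank F (growthSpace (F := F) X (n + 1)))))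
  obtain ⟨hfin, hcard⟩ := sortedWords_finite_and_ncard_le (w := fun j => j.1 + 1) (s := s)
    (fun j hj => mem_sigma.2 ⟨mem_range.2 hj, mem_univ _⟩) fun j _ => j.1.succ_pos
  have hX : X ⊆ Submodule.span F (growthBasis F X '' {r | r.1 + 1 ≤ 1}) :=
    fun x hx => growthSpace_le_span_growthBasis X 1 (Submodule.subset_span hx)
  have hdim := finrank_le_ncard_sortedWords hfin
    (ueaFiltration_le_sortedWordSpan (lie_growthBasis_mem_span X) hX m)
  calc (finrank F (ueaFiltration (F := F) X m) : ℝ) * t ^ m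
      ≤ ({g : s → ℕ | ∑ i : s, (i.1.1 + 1) * g i ≤ m}.ncard : ℝ) * t ^ m := by
        gcongr; exact_mod_cast hdim.trans hcard
    _ ≤ ∏ i : s, (1 - t ^ (i.1.1 + 1))⁻¹ :=
        ncard_setOf_sum_mul_le_mul_pow_le (fun i => i.1.1.succ_pos) m ht0 ht1
    _ = _ := by
        rw [prod_coe_sort s fun i => (1 - t ^ (i.1 + 1))⁻¹, prod_sigma]
        simp

end GrowthBasis

section Analysis

open Finset Real

theorem inv_one_sub_le_exp {x t : ℝ} (hx : 0 ≤ x) (hxt : x ≤ t) (ht : t < 1) :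
    (1 - x)⁻¹ ≤ exp (x / (1 - t)) := by
  have hx1 : 0 < 1 - x := by linarith
  calc (1 - x)⁻¹ = x / (1 - x) + 1 := by field_simp; ring
    _ ≤ exp (x / (1 - x)) := add_one_le_exp _
    _ ≤ exp (x / (1 - t)) := exp_le_exp.2 (div_le_div_of_nonneg_left hx (by linarith) (by linarith))

theorem prod_inv_one_sub_pow_le_exp_tsum {d : ℕ → ℕ} {t : ℝ} (ht0 : 0 ≤ t) (ht1 : t < 1)
    (hd : Summable fun n => (d n : ℝ) * t ^ n) (m : ℕ) :
    ∏ n ∈ range m, ((1 - t ^ (n + 1))⁻¹) ^ d (n + 1) ≤ exp ((∑' n, d n * t ^ n) / (1 - t)) :=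
  calc ∏ n ∈ range m, ((1 - t ^ (n + 1))⁻¹) ^ d (n + 1)
      ≤ ∏ n ∈ range m, exp (t ^ (n + 1) / (1 - t)) ^ d (n + 1) := by
        have hx (n : ℕ) : 0 ≤ (1 - t ^ (n + 1))⁻¹ :=
          inv_nonneg.2 (sub_nonneg.2 (pow_le_one₀ ht0 ht1.le))
        exact prod_le_prod (fun n _ => pow_nonneg (hx n) _) fun n _ => pow_le_pow_left₀ (hx n)
          (inv_one_sub_le_exp (by positivity) (pow_le_of_le_one ht0 ht1.le n.succ_ne_zero) ht1) _
    _ = exp ((∑ n ∈ range m, d (n + 1) * t ^ (n + 1)) / (1 - t)) := by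
        simp only [← exp_nat_mul, ← exp_sum, sum_div, mul_div_assoc]
    _ ≤ exp ((∑' n, d n * t ^ n) / (1 - t)) := by
        refine exp_le_exp.2 (div_le_div_of_nonneg_right ?_ (by linarith))
        calc ∑ n ∈ range m, (d (n + 1) : ℝ) * t ^ (n + 1)
            ≤ ∑ n ∈ range (m + 1), (d n : ℝ) * t ^ n := by
              rw [sum_range_succ']; exact le_add_of_nonneg_right (by positivity)
          _ ≤ ∑' n, d n * t ^ n := hd.sum_le_tsum _ fun n _ => by positivity

theorem summable_mul_pow_of_tendsto_div_pow {d : ℕ → ℕ}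
    (hd : ∀ C : ℝ, 1 < C → Tendsto (fun n => (d n : ℝ) / C ^ n) atTop (nhds 0))
    {t : ℝ} (ht0 : 0 < t) (ht1 : t < 1) : Summable fun n => (d n : ℝ) * t ^ n := by
  obtain ⟨C, hC1, hCt⟩ := exists_between (one_lt_inv₀ ht0 |>.2 ht1)
  have hC0 : 0 < C := zero_lt_one.trans hC1
  obtain ⟨M, hM⟩ := (hd C hC1).bddAbove_range
  have hCt' : C * t < 1 := by
    simpa [ht0.ne'] using mul_lt_mul_of_pos_right hCt ht0
  refine Summable.of_nonneg_of_le (fun n => by positivity) (fun n => ?_)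
    ((summable_geometric_of_lt_one (by positivity) hCt').mul_left M)
  have hdn : (d n : ℝ) ≤ M * C ^ n := (div_le_iff₀ (by positivity)).1 (hM ⟨n, rfl⟩)
  calc (d n : ℝ) * t ^ n ≤ M * C ^ n * t ^ n := by gcongr
    _ = M * (C * t) ^ n := by ring

theorem tendsto_div_pow_of_mul_pow_le {a : ℕ → ℝ} (ha : ∀ m, 0 ≤ a m) {C t K : ℝ} (hC : 1 < C)
    (hCt : C⁻¹ < t) (hK : ∀ m, a m * t ^ m ≤ K) :
    Tendsto (fun m => a m / C ^ m) atTop (nhds 0) := by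
  have hC0 : 0 < C := zero_lt_one.trans hC
  have ht0 : 0 < t := (inv_pos.2 hC0).trans hCt
  have hCt' : 1 < C * t := (inv_lt_iff_one_lt_mul₀' hC0).1 hCt
  have hlim : Tendsto (fun m => K * (C * t)⁻¹ ^ m) atTop (nhds 0) := by
    simpa only [mul_zero] using (tendsto_pow_atTop_nhds_zero_of_lt_one (by positivity)
      (inv_lt_one_of_one_lt₀ hCt')).const_mul K
  refine squeeze_zero (fun m => div_nonneg (ha m) (by positivity)) (fun m => ?_) hlim
  calc a m / C ^ m = a m * t ^ m * (C * t)⁻¹ ^ m := by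
        rw [mul_inv, mul_pow, inv_pow, inv_pow]; field_simp
    _ ≤ K * (C * t)⁻¹ ^ m := by gcongr; exact hK m

end Analysis

theorem uea_subexponential_growth_general (F : Type) [Field F] (L : Type) [LieRing L]
    [LieAlgebra F L] (X : Set L) (hXfin : X.Finite)
    (hsub : ∀ C : ℝ, 1 < C →
      Tendsto (fun n => (Module.finrank F (growthSpace (F := F) X n) : ℝ) / C ^ n)
        atTop (nhds 0)) :
    ∀ C : ℝ, 1 < C →
      Tendsto (fun m => (Module.finrank F (ueaFiltration (F := F) X m) : ℝ) / C ^ m)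
        atTop (nhds 0) := by
  intro C hC
  have := hXfin.to_subtype
  obtain ⟨t, hCt, ht1⟩ := exists_between (inv_lt_one_of_one_lt₀ hC)
  have ht0 : 0 < t := (inv_pos.2 (zero_lt_one.trans hC)).trans hCt
  have hsum := summable_mul_pow_of_tendsto_div_pow hsub ht0 ht1
  exact tendsto_div_pow_of_mul_pow_le (fun m => Nat.cast_nonneg _) hC hCt fun m =>
    (finrank_ueaFiltration_mul_pow_le X m ht0.le ht1).trans
      (prod_inv_one_sub_pow_le_exp_tsum ht0.le ht1 hsum m)

/-- Smith's theorem: if a finitely generated Lie algebra `L` over a field of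
characteristic `0` has subexponential growth, then the universal enveloping algebra `U(L)` has
subexponential growth: `dim W_m` grows subexponentially in `m`, where `W_m` is the span of
products of at most `m` generators. -/
theorem uea_subexponential_growth (F : Type) [Field F] [CharZero F] (L : Type) [LieRing L]
    [LieAlgebra F L] (X : Set L) (hXfin : X.Finite)
    (hgen : (⨆ n : ℕ, growthSpace (F := F) X n) = ⊤)
    (hsub : ∀ C : ℝ, 1 < C →
      Tendsto (fun n => (Module.finrank F (growthSpace (F := F) X n) : ℝ) / C ^ n)
        atTop (nhds 0)) :
    ∀ C : ℝ, 1 < C →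
      Tendsto (fun m => (Module.finrank F (ueaFiltration (F := F) X m) : ℝ) / C ^ m)
        atTop (nhds 0) :=
  uea_subexponential_growth_general F L X hXfin hsub
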